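/- arXiv:1101.0382 — 2 statements merged into one kernel-verified Lean document; each statement's English description precedes it below -/
import Mathlib

section
/- Let d_k, d_{k+1} > 0 and l ∈ ℝ. Define d̄_{k+1} = d_k + l² d_{k+1}, d̄_k = (d_k/d̄_{k+1}) d_{k+1}, and l̄ = d_{k+1} l / d̄_{k+1}. Let P = [[0,1],[1,0]] be the 2×2 swap, L = [[1,0],[l,1]], L̄ = [[1,0],[l̄,1]], D = diag(d_k, d_{k+1}), and D̄ = diag(d̄_k, d̄_{k+1}). Then P^T (L^T D L) P = L̄^T D̄ L̄, and d̄_k d̄_{k+1} = d_k d_{k+1}. -/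
open Matrix

/-
Both sides are explicit `2×2` matrices. Writing `s = d_k + l² d_{k+1}`, the matrix `LᵀDL` is
`[[s, l d_{k+1}], [l d_{k+1}, d_{k+1}]]`, and conjugating by the swap exchanges its diagonal
entries. The new factors are read off from this matrix exactly as `L, D` are read off from
`LᵀDL`: the bottom-right entry is `d̄_{k+1} = s`, the off-diagonal entry is `l̄ d̄_{k+1}`, and the
top-left entry `d_{k+1} = d̄_k + l̄² d̄_{k+1}` determines `d̄_k = d_k d_{k+1} / s`. Division by `s`
is legitimate because `s > 0`.
-/

section TwoByTwo

variable {R : Type*} [CommRing R]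

theorem transpose_unitLower_mul_diag_mul_unitLower (l a b : R) :
    !![1, 0; l, 1]ᵀ * !![a, 0; 0, b] * !![1, 0; l, 1] = !![a + l ^ 2 * b, l * b; l * b, b] := by
  ext i j
  fin_cases i <;> fin_cases j <;> simp [Matrix.mul_apply, Fin.sum_univ_succ] <;> ring

theorem swap_transpose_mul_mul_swap (a b c d : R) :
    !![0, 1; 1, 0]ᵀ * !![a, b; c, d] * !![0, 1; 1, 0] = !![d, c; b, a] := by
  ext i j
  fin_cases i <;> fin_cases j <;> simp [Matrix.mul_apply, Fin.sum_univ_succ]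

end TwoByTwo

theorem swap_conj_ldlt_eq_ldlt {K : Type*} [Field K] (d e l : K) (hs : d + l ^ 2 * e ≠ 0) :
    !![0, 1; 1, 0]ᵀ * (!![1, 0; l, 1]ᵀ * !![d, 0; 0, e] * !![1, 0; l, 1]) * !![0, 1; 1, 0] =
      !![1, 0; e * l / (d + l ^ 2 * e), 1]ᵀ *
        !![d / (d + l ^ 2 * e) * e, 0; 0, d + l ^ 2 * e] *
        !![1, 0; e * l / (d + l ^ 2 * e), 1] := by
  rw [transpose_unitLower_mul_diag_mul_unitLower, transpose_unitLower_mul_diag_mul_unitLower,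
    swap_transpose_mul_mul_swap]
  have hdiag : d / (d + l ^ 2 * e) * e + (e * l / (d + l ^ 2 * e)) ^ 2 * (d + l ^ 2 * e) = e := by
    field_simp
  have hoff : e * l / (d + l ^ 2 * e) * (d + l ^ 2 * e) = l * e := by
    rw [div_mul_cancel₀ _ hs, mul_comm]
  rw [hdiag, hoff]

/-- Symmetric permutation update of the `2×2` block of an `LᵀDL` factorization:
with `d̄_{k+1} = d_k + l² d_{k+1}`, `d̄_k = (d_k/d̄_{k+1}) d_{k+1}`,
`l̄ = d_{k+1} l / d̄_{k+1}`, we have `Pᵀ(LᵀDL)P = L̄ᵀD̄L̄` and `d̄_k d̄_{k+1} = d_k d_{k+1}`. -/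
theorem stmt_10 (dk dk1 l : ℝ) (hdk : 0 < dk) (hdk1 : 0 < dk1)
    (dbark1 dbark lbar : ℝ)
    (h1 : dbark1 = dk + l ^ 2 * dk1)
    (h2 : dbark = (dk / dbark1) * dk1)
    (h3 : lbar = dk1 * l / dbark1)
    (P L Lbar D Dbar : Matrix (Fin 2) (Fin 2) ℝ)
    (hP : P = !![0, 1; 1, 0]) (hL : L = !![1, 0; l, 1]) (hLbar : Lbar = !![1, 0; lbar, 1])
    (hD : D = !![dk, 0; 0, dk1]) (hDbar : Dbar = !![dbark, 0; 0, dbark1]) :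
    Pᵀ * (Lᵀ * D * L) * P = Lbarᵀ * Dbar * Lbar ∧ dbark * dbark1 = dk * dk1 := by
  have hs : dbark1 ≠ 0 := by
    rw [h1]
    positivity
  subst hP hL hLbar hD hDbar h2 h3
  refine ⟨?_, by field_simp⟩
  subst h1
  exact swap_conj_ldlt_eq_ldlt dk dk1 l hs
end

section
/- Let L ∈ ℝ^{n×n} be unit lower triangular, let 1 ≤ j < k ≤ n, let μ ∈ ℤ, and set L̄ = L(I − μ e_k e_j^T), which is again unit lower triangular. Let x̂ ∈ ℝ^n and define ẑ ∈ ℝ^n by ẑ_i = x̂_i for i ≠ j and ẑ_j = x̂_j − μ x̂_k. Let x, z ∈ ℝ^n satisfy z_i = x_i for all i > j. Define the conditional estimates x̄ by the downward recursion x̄_i = x̂_i + Σ_{t=i+1}^n l_{ti}(x_t − x̄_t) for i = n, n−1, …, 1, and define z̄ by the same recursion with L̄, ẑ, z in place of L, x̂, x. Then z̄_i = x̄_i for all i > j, and x̄_j − z̄_j = μ x_k. -/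
open Matrix

/-!
Right multiplication by `I - μ e_k e_jᵀ` only changes column `j` of `L`, replacing it by
`L_j - μ L_k`. Since the recursion for `x̄_i` only reads column `i` of `L` and the entries
`x_t, x̄_t` with `t > i`, downward induction gives `z̄_i = x̄_i` for `i > j`. At `i = j` the two
recursions differ by `μ (x̂_k + ∑_{t > j} l_{tk} (x_t - x̄_t))`; as `L` is unit lower triangular
this sum is `(x_k - x̄_k) + ∑_{t > k} l_{tk} (x_t - x̄_t)`, and the recursion at `k` collapses
the whole expression to `μ x_k`.
-/

theorem Matrix.mul_one_sub_smul_single_apply {ι R : Type*} [Fintype ι] [DecidableEq ι]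
    [CommRing R] (L : Matrix ι ι R) (c : R) (k j t i : ι) :
    (L * (1 - c • single k j 1) : Matrix ι ι R) t i = L t i - if i = j then c * L t k else 0 := by
  rw [mul_sub, mul_one, Matrix.mul_smul, sub_apply, smul_apply, smul_eq_mul]
  by_cases hij : i = j
  · subst hij
    rw [mul_single_apply_same, if_pos rfl, mul_one]
  · rw [mul_single_apply_of_ne _ _ _ _ _ hij, if_neg hij, mul_zero]

section ConditionalEstimate

variable {ι R : Type*} [LinearOrder ι] [LocallyFiniteOrderTop ι] [CommRing R]

def IsConditionalEstimate (L : Matrix ι ι R) (xhat x xbar : ι → R) : Prop :=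
  ∀ i, xbar i = xhat i + ∑ t ∈ Finset.Ioi i, L t i * (x t - xbar t)

theorem sum_Ioi_mul_col_eq_of_unitLowerTriangular {L : Matrix ι ι R}
    (hLlow : ∀ i j, i < j → L i j = 0) (hLdiag : ∀ i, L i i = 1) {j k : ι} (hjk : j < k)
    (w : ι → R) :
    ∑ t ∈ Finset.Ioi j, L t k * w t = w k + ∑ t ∈ Finset.Ioi k, L t k * w t := by
  have hIci : ∑ t ∈ Finset.Ioi j, L t k * w t = ∑ t ∈ Finset.Ici k, L t k * w t := by
    refine (Finset.sum_subset (fun t ht => ?_) fun t _ hkt => ?_).symm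
    · exact Finset.mem_Ioi.mpr (hjk.trans_le (Finset.mem_Ici.mp ht))
    · rw [hLlow t k (lt_of_not_ge (mt Finset.mem_Ici.mpr hkt)), zero_mul]
  rw [hIci, ← Finset.Ioi_insert, Finset.sum_insert Finset.notMem_Ioi_self, hLdiag, one_mul]

namespace IsConditionalEstimate

variable {L : Matrix ι ι R} {xhat x xbar : ι → R}

theorem add_sum_Ioi_of_lt (hxbar : IsConditionalEstimate L xhat x xbar)
    (hLlow : ∀ i j, i < j → L i j = 0) (hLdiag : ∀ i, L i i = 1) {j k : ι} (hjk : j < k) :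
    xhat k + ∑ t ∈ Finset.Ioi j, L t k * (x t - xbar t) = x k := by
  rw [sum_Ioi_mul_col_eq_of_unitLowerTriangular hLlow hLdiag hjk, hxbar k]
  ring

theorem eq_of_lt [WellFoundedGT ι] {L' : Matrix ι ι R} {zhat z zbar : ι → R}
    (hxbar : IsConditionalEstimate L xhat x xbar) (hzbar : IsConditionalEstimate L' zhat z zbar)
    {j : ι} (hL : ∀ t i, j < i → L' t i = L t i) (hhat : ∀ i, j < i → zhat i = xhat i)
    (hz : ∀ i, j < i → z i = x i) {i : ι} (hji : j < i) : zbar i = xbar i := by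
  induction i using WellFoundedGT.induction with
  | _ i ih =>
    rw [hzbar, hxbar, hhat i hji]
    congr 1
    refine Finset.sum_congr rfl fun t ht => ?_
    have hit : i < t := Finset.mem_Ioi.mp ht
    rw [hL t i hji, hz t (hji.trans hit), ih t hit (hji.trans hit)]

theorem sub_eq_mul_of_col_sub (hxbar : IsConditionalEstimate L xhat x xbar)
    (hLlow : ∀ i j, i < j → L i j = 0) (hLdiag : ∀ i, L i i = 1) {L' : Matrix ι ι R}
    {zhat z zbar : ι → R} (hzbar : IsConditionalEstimate L' zhat z zbar) {j k : ι} (hjk : j < k)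
    (c : R) (hL' : ∀ t, L' t j = L t j - c * L t k) (hzhat : zhat j = xhat j - c * xhat k)
    (hz : ∀ t, j < t → z t = x t) (hzbar_eq : ∀ t, j < t → zbar t = xbar t) :
    xbar j - zbar j = c * x k := by
  have hcol : ∀ t ∈ Finset.Ioi j, L t j * (x t - xbar t) - L' t j * (z t - zbar t)
      = c * (L t k * (x t - xbar t)) := by
    intro t ht
    rw [hL', hz t (Finset.mem_Ioi.mp ht), hzbar_eq t (Finset.mem_Ioi.mp ht)]
    ring
  calc xbar j - zbar j
      = c * xhat k + ∑ t ∈ Finset.Ioi j, (L t j * (x t - xbar t) - L' t j * (z t - zbar t)) := by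
        rw [hxbar j, hzbar j, hzhat, Finset.sum_sub_distrib]
        ring
    _ = c * (xhat k + ∑ t ∈ Finset.Ioi j, L t k * (x t - xbar t)) := by
        rw [Finset.sum_congr rfl hcol, ← Finset.mul_sum, mul_add]
    _ = c * x k := by rw [hxbar.add_sum_Ioi_of_lt hLlow hLdiag hjk]

end IsConditionalEstimate

end ConditionalEstimate

/-- Effect of a lower triangular IGT on the conditional estimates: with
`L̄ = L(I - μ e_k e_jᵀ)` (`j < k`), `ẑ` agreeing with `x̂` except `ẑ_j = x̂_j - μ x̂_k`,
and `z_i = x_i` for `i > j`, the conditional estimates satisfy `z̄_i = x̄_i` for all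
`i > j` and `x̄_j - z̄_j = μ x_k`. -/
theorem stmt_12 (n : ℕ) (L : Matrix (Fin n) (Fin n) ℝ)
    (hLlow : ∀ i j : Fin n, i < j → L i j = 0) (hLdiag : ∀ i, L i i = 1)
    (j k : Fin n) (hjk : j < k) (μ : ℤ)
    (Lbar : Matrix (Fin n) (Fin n) ℝ)
    (hLbar : Lbar = L * (1 - (μ : ℝ) • Matrix.single k j 1))
    (xhat zhat : Fin n → ℝ)
    (hzhat : ∀ i, zhat i = if i = j then xhat j - (μ : ℝ) * xhat k else xhat i)
    (x z : Fin n → ℝ) (hxz : ∀ i, j < i → z i = x i)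
    (xbar zbar : Fin n → ℝ)
    (hxbar : ∀ i, xbar i = xhat i + ∑ t ∈ Finset.Ioi i, L t i * (x t - xbar t))
    (hzbar : ∀ i, zbar i = zhat i + ∑ t ∈ Finset.Ioi i, Lbar t i * (z t - zbar t)) :
    (∀ i, j < i → zbar i = xbar i) ∧ xbar j - zbar j = (μ : ℝ) * x k := by
  have hLbar_apply (t i : Fin n) : Lbar t i = L t i - if i = j then (μ : ℝ) * L t k else 0 := by
    rw [hLbar, mul_one_sub_smul_single_apply]
  have habove : ∀ i, j < i → zbar i = xbar i := fun i hji =>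
    IsConditionalEstimate.eq_of_lt hxbar hzbar
      (fun t i hji => by rw [hLbar_apply, if_neg hji.ne', sub_zero])
      (fun i hji => by rw [hzhat, if_neg hji.ne']) hxz hji
  refine ⟨habove, IsConditionalEstimate.sub_eq_mul_of_col_sub hxbar hLlow hLdiag hzbar hjk _
    (fun t => by rw [hLbar_apply, if_pos rfl]) (by rw [hzhat, if_pos rfl]) hxz habove⟩
end
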